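/- If-direction of Theorem 3(A) (pseudo-efficient M-estimation of joint quantile and Expected Shortfall models): In the quantile–ES block setup, assume q₁ = q₂ and V_q = V_e =: V ℙ-a.s. (equal model gradients), and suppose there exist constants c₁, c₂, c₃ > 0 and c₄, c₅ ∈ ℝ with c₄ + c₃/(α c₁ c₂) > 0 such that, ℙ-a.s., v = c₁ (q_v − e_v)², f = c₂ / (q_v − e_v), φ'' = c₃ / v, g' = c₄ f + c₅, and φ' = (c₃/(c₁ c₂)) f − α c₅ (conditions (20)–(24) of the paper). Then, with a' := g' + φ'/α = (c₄ + c₃/(α c₁ c₂)) f, there exists a deterministic invertible matrix C ∈ ℝ^{2q₁×2q₁} such that A = C Dᵀ S⁻¹ ℙ-a.s. -/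

import Mathlib

/-! When `V_q = V_e = V`, both `A` and `Dᵀ` have the form `M ⊗ V` for a `2 × 2` matrix `M`,
namely `diag(a', φ'')` and `diag(f, 1)`, and `(M ⊗ V) N = (M N) ⊗ V`,
`(C₀ ⊗ 1) (M ⊗ V) = (C₀ M) ⊗ V`. Taking `C = C₀ ⊗ 1`, the claim `A S = C Dᵀ` thus reduces to
`diag(a', φ'') S = C₀ diag(f, 1)`. By (22)–(24), `a' = K f` and `φ'' = c₃ / v`, and by (20)–(21)
the first column of `diag(K f, c₃ / v) S` is a constant multiple of `f` and its second column is
constant; this determines `C₀`, whose determinant `K (1 - α) c₃` is positive. -/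

open MeasureTheory Matrix

/-- The matrix `D` of the quantile–ES block setup: first row `(f V_qᵀ, 0)`,
second row `(0, V_eᵀ)`. -/
def qesD {q₁ q₂ : ℕ} (f : ℝ) (Vq : Fin q₁ → ℝ) (Ve : Fin q₂ → ℝ) :
    Matrix (Fin 2) (Fin q₁ ⊕ Fin q₂) ℝ :=
  Matrix.of fun i j =>
    Sum.elim (fun j₁ => if i = 0 then f * Vq j₁ else 0)
      (fun j₂ => if i = 1 then Ve j₂ else 0) j

/-- The M-estimator instrument matrix `A` of the quantile–ES block setup:
first column `(a' V_q, 0)ᵀ`, second column `(0, φ'' V_e)ᵀ`. -/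
def qesA {q₁ q₂ : ℕ} (a' phi'' : ℝ) (Vq : Fin q₁ → ℝ) (Ve : Fin q₂ → ℝ) :
    Matrix (Fin q₁ ⊕ Fin q₂) (Fin 2) ℝ :=
  Matrix.of fun i j =>
    Sum.elim (fun i₁ => if j = 0 then a' * Vq i₁ else 0)
      (fun i₂ => if j = 1 then phi'' * Ve i₂ else 0) i

/-- The conditional second-moment matrix `S` of the quantile–ES block setup. -/
noncomputable def qesS (α qv ev v : ℝ) : Matrix (Fin 2) (Fin 2) ℝ :=
  !![α * (1 - α), (1 - α) * (qv - ev);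
     (1 - α) * (qv - ev), v / α + (1 - α) * (qv - ev) ^ 2 / α]

namespace Matrix

variable {R : Type*} [CommRing R] {n p : Type*}

/-- `M ⊗ V`, the two copies of `n` being indexed by `n ⊕ n`; likewise `kronOneSum C₀ = C₀ ⊗ 1`. -/
def kronVecSum (M : Matrix (Fin 2) p R) (V : n → R) : Matrix (n ⊕ n) p R :=
  fromRows (vecMulVec V (M 0)) (vecMulVec V (M 1))

theorem kronVecSum_mul [Fintype p] (M : Matrix (Fin 2) p R) (V : n → R)
    (N : Matrix p p R) : kronVecSum M V * N = kronVecSum (M * N) V := by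
  simp only [kronVecSum, fromRows_mul, vecMulVec_mul]
  rfl

variable [DecidableEq n]

def kronOneSum (C₀ : Matrix (Fin 2) (Fin 2) R) : Matrix (n ⊕ n) (n ⊕ n) R :=
  fromBlocks (C₀ 0 0 • 1) (C₀ 0 1 • 1) (C₀ 1 0 • 1) (C₀ 1 1 • 1)

theorem kronOneSum_one : kronOneSum (n := n) (1 : Matrix (Fin 2) (Fin 2) R) = 1 := by
  simp [kronOneSum]

variable [Fintype n]

theorem kronOneSum_mul_kronVecSum (C₀ : Matrix (Fin 2) (Fin 2) R)
    (M : Matrix (Fin 2) p R) (V : n → R) :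
    kronOneSum (n := n) C₀ * kronVecSum M V = kronVecSum (C₀ * M) V := by
  simp only [kronOneSum, kronVecSum, fromBlocks_mul_fromRows]
  ext (i | i) j <;> simp [mul_apply, Fin.sum_univ_two, vecMulVec_apply] <;> ring

theorem kronOneSum_mul (C₀ C₁ : Matrix (Fin 2) (Fin 2) R) :
    kronOneSum (n := n) C₀ * kronOneSum C₁ = kronOneSum (C₀ * C₁) := by
  simp only [kronOneSum, fromBlocks_multiply, smul_mul, Matrix.mul_smul, Matrix.one_mul,
    smul_smul, ← add_smul, mul_apply, Fin.sum_univ_two, mul_comm]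

theorem isUnit_det_kronOneSum {C₀ : Matrix (Fin 2) (Fin 2) R} (h : IsUnit C₀.det) :
    IsUnit (kronOneSum (n := n) C₀).det :=
  isUnit_det_of_right_inverse (B := kronOneSum C₀⁻¹) <| by
    rw [kronOneSum_mul, mul_nonsing_inv _ h, kronOneSum_one]

end Matrix

section QuantileES

variable {q : ℕ}

theorem qesA_eq_kronVecSum (a' phi'' : ℝ) (V : Fin q → ℝ) :
    qesA a' phi'' V V = kronVecSum !![a', 0; 0, phi''] V := by
  ext (i | i) j <;> fin_cases j <;> simp [qesA, kronVecSum, vecMulVec_apply, mul_comm]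

theorem qesD_transpose_eq_kronVecSum (f : ℝ) (V : Fin q → ℝ) :
    (qesD f V V)ᵀ = kronVecSum !![f, 0; 0, 1] V := by
  ext (i | i) j <;> fin_cases j <;> simp [qesD, kronVecSum, vecMulVec_apply, mul_comm]

theorem qesS_det {α : ℝ} (hα : α ≠ 0) (qv ev v : ℝ) :
    (qesS α qv ev v).det = (1 - α) * v := by
  rw [qesS, det_fin_two_of]
  field_simp
  ring

/-- `C = C₀ ⊗ 1` for this `C₀`, with `K = c₄ + c₃ / (α c₁ c₂)` the constant in `a' = K f`. -/
noncomputable def qesCoeff (α c₁ c₂ c₃ K : ℝ) : Matrix (Fin 2) (Fin 2) ℝ :=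
  !![K * α * (1 - α), K * (1 - α) * c₂;
     c₃ * (1 - α) / (c₁ * c₂), c₃ * (c₁ + 1 - α) / (α * c₁)]

variable {α c₁ c₂ c₃ : ℝ}

theorem qesCoeff_det (hα : α ≠ 0) (hc₁ : c₁ ≠ 0) (hc₂ : c₂ ≠ 0) (K : ℝ) :
    (qesCoeff α c₁ c₂ c₃ K).det = K * (1 - α) * c₃ := by
  rw [qesCoeff, det_fin_two_of]
  field_simp
  ring

theorem qesCoeff_mul_eq_mul_qesS (hα : α ≠ 0) (hc₁ : c₁ ≠ 0) (hc₂ : c₂ ≠ 0)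
    {qv ev f v : ℝ} (hqe : qv - ev ≠ 0) (hv : v = c₁ * (qv - ev) ^ 2)
    (hf : f = c₂ / (qv - ev)) (K : ℝ) :
    qesCoeff α c₁ c₂ c₃ K * !![f, 0; 0, 1] = !![K * f, 0; 0, c₃ / v] * qesS α qv ev v := by
  subst hv hf
  ext i j
  fin_cases i <;> fin_cases j <;> simp [qesCoeff, qesS] <;> field_simp
  ring

end QuantileES

theorem qes_pseudo_efficient_attains_general
    {Ω : Type*} [MeasureSpace Ω]
    {q₁ : ℕ}
    {α : ℝ} (hα : α ∈ Set.Ioo (0 : ℝ) 1)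
    (Vq Ve : Ω → Fin q₁ → ℝ) (f v qv ev g' phi' phi'' : Ω → ℝ)
    (hvpos : ∀ᵐ ω, 0 < v ω)
    (hqe : ∀ᵐ ω, ev ω < qv ω)
    (hVeq : ∀ᵐ ω, Vq ω = Ve ω)
    {c₁ c₂ c₃ : ℝ} {c₄ c₅ : ℝ} (hc₁ : 0 < c₁) (hc₂ : 0 < c₂) (hc₃ : 0 < c₃)
    (hc₄ : 0 < c₄ + c₃ / (α * c₁ * c₂))
    (h20 : ∀ᵐ ω, v ω = c₁ * (qv ω - ev ω) ^ 2)
    (h21 : ∀ᵐ ω, f ω = c₂ / (qv ω - ev ω))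
    (h22 : ∀ᵐ ω, phi'' ω = c₃ / v ω)
    (h23 : ∀ᵐ ω, g' ω = c₄ * f ω + c₅)
    (h24 : ∀ᵐ ω, phi' ω = (c₃ / (c₁ * c₂)) * f ω - α * c₅) :
    ∃ C : Matrix (Fin q₁ ⊕ Fin q₁) (Fin q₁ ⊕ Fin q₁) ℝ, IsUnit C.det ∧
      ∀ᵐ ω, qesA (g' ω + phi' ω / α) (phi'' ω) (Vq ω) (Ve ω)
        = C * (qesD (f ω) (Vq ω) (Ve ω))ᵀ * (qesS α (qv ω) (ev ω) (v ω))⁻¹ := by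
  obtain ⟨hα₀, hα₁⟩ := hα
  set K := c₄ + c₃ / (α * c₁ * c₂) with hK
  have hC₀ : IsUnit (qesCoeff α c₁ c₂ c₃ K).det := by
    rw [qesCoeff_det hα₀.ne' hc₁.ne' hc₂.ne']
    exact (mul_pos (mul_pos hc₄ (sub_pos.2 hα₁)) hc₃).ne'.isUnit
  refine ⟨kronOneSum (qesCoeff α c₁ c₂ c₃ K), isUnit_det_kronOneSum hC₀, ?_⟩
  filter_upwards [hvpos, hqe, hVeq, h20, h21, h22, h23, h24]
    with ω hv hlt hV e20 e21 e22 e23 e24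
  have ha' : g' ω + phi' ω / α = K * f ω := by
    rw [e23, e24, hK]
    field_simp
    ring
  have hS : IsUnit (qesS α (qv ω) (ev ω) (v ω)).det := by
    rw [qesS_det hα₀.ne']
    exact (mul_pos (sub_pos.2 hα₁) hv).ne'.isUnit
  rw [ha', e22, ← hV, qesA_eq_kronVecSum, qesD_transpose_eq_kronVecSum,
    kronOneSum_mul_kronVecSum, qesCoeff_mul_eq_mul_qesS hα₀.ne' hc₁.ne' hc₂.ne'
      (sub_pos.2 hlt).ne' e20 e21, ← kronVecSum_mul, mul_nonsing_inv_cancel_right _ _ hS]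

/-- If-direction of Theorem 3(A): under equal model gradients and the
conditions (20)–(24) of the paper, there exists a deterministic invertible matrix `C`
such that the M-estimator instrument matrix satisfies `A = C Dᵀ S⁻¹` ℙ-a.s.,
where the first column of `A` is built from `a' = g' + φ'/α`. -/
theorem qes_pseudo_efficient_attains
    {Ω : Type*} [MeasureSpace Ω] [IsProbabilityMeasure (volume : Measure Ω)]
    {q₁ : ℕ} (hq₁ : 1 ≤ q₁)
    {α : ℝ} (hα : α ∈ Set.Ioo (0 : ℝ) 1)
    (Vq Ve : Ω → Fin q₁ → ℝ) (f v qv ev g' phi' phi'' : Ω → ℝ)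
    (hVqmeas : Measurable Vq) (hVemeas : Measurable Ve)
    (hfmeas : Measurable f) (hvmeas : Measurable v)
    (hqvmeas : Measurable qv) (hevmeas : Measurable ev)
    (hg'meas : Measurable g') (hphi'meas : Measurable phi')
    (hphi''meas : Measurable phi'')
    (hfpos : ∀ᵐ ω, 0 < f ω) (hvpos : ∀ᵐ ω, 0 < v ω)
    (hqe : ∀ᵐ ω, ev ω < qv ω)
    (hVeq : ∀ᵐ ω, Vq ω = Ve ω)
    {c₁ c₂ c₃ : ℝ} {c₄ c₅ : ℝ} (hc₁ : 0 < c₁) (hc₂ : 0 < c₂) (hc₃ : 0 < c₃)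
    (hc₄ : 0 < c₄ + c₃ / (α * c₁ * c₂))
    (h20 : ∀ᵐ ω, v ω = c₁ * (qv ω - ev ω) ^ 2)
    (h21 : ∀ᵐ ω, f ω = c₂ / (qv ω - ev ω))
    (h22 : ∀ᵐ ω, phi'' ω = c₃ / v ω)
    (h23 : ∀ᵐ ω, g' ω = c₄ * f ω + c₅)
    (h24 : ∀ᵐ ω, phi' ω = (c₃ / (c₁ * c₂)) * f ω - α * c₅) :
    ∃ C : Matrix (Fin q₁ ⊕ Fin q₁) (Fin q₁ ⊕ Fin q₁) ℝ, IsUnit C.det ∧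
      ∀ᵐ ω, qesA (g' ω + phi' ω / α) (phi'' ω) (Vq ω) (Ve ω)
        = C * (qesD (f ω) (Vq ω) (Ve ω))ᵀ * (qesS α (qv ω) (ev ω) (v ω))⁻¹ :=
  qes_pseudo_efficient_attains_general hα Vq Ve f v qv ev g' phi' phi'' hvpos hqe hVeq hc₁ hc₂ hc₃
    hc₄ h20 h21 h22 h23 h24
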